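/- (Theorem 6) Under the SDMD-RSC scheme with learning rates η_t = 1/(γt) and approximation error ρ_t = η_t³/(2σ), for every x* ∈ X the regret satisfies Reg_T := Σ_{t=1}^T f_t(x_t) − Σ_{t=1}^T f_t(x*) ≤ (3dG⋆² + 8ξRG⋆)(1 + ln T)/(2σγ) + 6dG⋆/(σγ²) + 2dξG⋆/(σ²γ²), where d := max_{1≤t≤T} d_t. -/

import Mathlib

/-!
Each round with feedback is an inexact Bregman proximal step on the linearised delayed losses
`g_t = ∑ k ∈ F_t, ∇f_k(x_k)`. First-order optimality of the exact minimiser `y` gives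
`B(z, y)/η ≤ D_t z - D_t y`; with `σ`-strong convexity of `ψ` this bounds `g_t(x_t - z)` by
`η_t‖g_t‖²/(2σ) + (B(z, x_t) - B(z, y))/η_t` and `‖x_t - y‖` by `η_t‖g_t‖/σ`. The tolerance
`η_t³/(2σ)` keeps `x_{t+1}` within `η_t²/σ` of `y`, which the Lipschitz gradient of `ψ` and the
radius `R` turn into an `O(η_t)` error in the Bregman terms.

Relative strong convexity subtracts `γ B(z, x_t)` from the linearised regret of round `t`, and
since `1/η_t = γ t` this cancels the telescoped Bregman terms. The gradient of round `t` is charged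
at round `t + d_t - 1`; the mismatch `x_t - x_{t+d_t-1}` spans fewer than `d` steps, and each step
is counted at most `d` times. Finally `∑ η_t ≤ (1 + log T)/γ` and `∑ η_t² ≤ 2/γ²`.
-/

open Finset

section

variable {E : Type*} [NormedAddCommGroup E] [NormedSpace ℝ E]

noncomputable def bregman (ψ : E → ℝ) (a b : E) : ℝ :=
  ψ a - ψ b - fderiv ℝ ψ b (a - b)

def BregmanStrongConvexOn (X : Set E) (σ : ℝ) (ψ : E → ℝ) : Prop :=
  ∀ a ∈ X, ∀ b ∈ X, σ / 2 * ‖a - b‖ ^ 2 ≤ bregman ψ a b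

/-- The paper's `D_t`, with `g = ∑ k ∈ F_t, ∇f_k(x_k)`, centre `x = x_t` and step size `η = η_t`. -/
noncomputable def mirrorObjective (g : E →L[ℝ] ℝ) (ψ : E → ℝ) (x : E) (η : ℝ) (z : E) : ℝ :=
  g z + bregman ψ z x / η

def IsInexactMirrorStep (X : Set E) (ψ : E → ℝ) (ρ : ℝ) (g : E →L[ℝ] ℝ) (η : ℝ) (x x' : E) :
    Prop :=
  x' ∈ X ∧ ∃ y ∈ X, IsMinOn (mirrorObjective g ψ x η) X y ∧
    mirrorObjective g ψ x η x' ≤ mirrorObjective g ψ x η y + ρ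

section Bregman

variable {ψ : E → ℝ}

@[simp]
lemma bregman_self (ψ : E → ℝ) (a : E) : bregman ψ a a = 0 := by
  simp [bregman]

lemma bregman_sub_bregman (ψ : E → ℝ) (a b c : E) :
    bregman ψ a c - bregman ψ b c = bregman ψ a b + (fderiv ℝ ψ b - fderiv ℝ ψ c) (a - b) := by
  simp only [bregman, map_sub, FunLike.coe_sub, Pi.sub_apply]
  ring

lemma bregman_sub_bregman_le {a b c : E} (h : 0 ≤ bregman ψ b c) :
    bregman ψ a b - bregman ψ a c ≤ ‖fderiv ℝ ψ b - fderiv ℝ ψ c‖ * ‖a - b‖ := by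
  have hthree := bregman_sub_bregman ψ a b c
  have hbound := (neg_le_abs _).trans ((fderiv ℝ ψ b - fderiv ℝ ψ c).le_opNorm (a - b))
  linarith

lemma hasFDerivAt_bregman_left {a : E} (hψ : DifferentiableAt ℝ ψ a) (b : E) :
    HasFDerivAt (fun w => bregman ψ w b) (fderiv ℝ ψ a - fderiv ℝ ψ b) a := by
  have hlin : HasFDerivAt (fun w => fderiv ℝ ψ b (w - b)) (fderiv ℝ ψ b) a := by
    simpa using ((fderiv ℝ ψ b).hasFDerivAt (x := a)).sub_const (fderiv ℝ ψ b b)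
  exact (hψ.hasFDerivAt.sub_const (ψ b)).sub hlin

lemma BregmanStrongConvexOn.nonneg {X : Set E} {σ : ℝ} (h : BregmanStrongConvexOn X σ ψ)
    (hσ : 0 ≤ σ) {a b : E} (ha : a ∈ X) (hb : b ∈ X) : 0 ≤ bregman ψ a b :=
  (by positivity : 0 ≤ σ / 2 * ‖a - b‖ ^ 2).trans (h a ha b hb)

end Bregman

section MirrorStep

variable {ψ : E → ℝ} {X : Set E} {g : E →L[ℝ] ℝ} {x y z : E} {η σ : ℝ}

lemma bregman_div_le_mirrorObjective_sub (hψ : DifferentiableAt ℝ ψ y) (hX : Convex ℝ X)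
    (hy : y ∈ X) (hz : z ∈ X) (hmin : IsMinOn (mirrorObjective g ψ x η) X y) :
    bregman ψ z y / η ≤ mirrorObjective g ψ x η z - mirrorObjective g ψ x η y := by
  have hderiv : HasFDerivAt (mirrorObjective g ψ x η)
      (g + η⁻¹ • (fderiv ℝ ψ y - fderiv ℝ ψ x)) y := by
    have hφ : mirrorObjective g ψ x η = fun w => g w + η⁻¹ * bregman ψ w x := by
      ext w
      rw [mirrorObjective, div_eq_inv_mul]
    exact hφ ▸ g.hasFDerivAt.add ((hasFDerivAt_bregman_left hψ x).const_mul η⁻¹)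
  have hopt := hmin.localize.hasFDerivWithinAt_nonneg hderiv.hasFDerivWithinAt
    (sub_mem_posTangentConeAt_of_segment_subset (hX.segment_subset hy hz))
  -- three-point identity: `D z - D y - B(z, y)/η` is the derivative of `D` at `y` along `z - y`
  have hthree := bregman_sub_bregman ψ z y x
  simp only [FunLike.coe_add, FunLike.coe_smul, Pi.add_apply,
    Pi.smul_apply, smul_eq_mul] at hopt
  simp only [mirrorObjective, div_eq_inv_mul]
  linear_combination hopt - η⁻¹ * hthree + map_sub g z y

lemma mirrorObjective_sub_le (hσ : 0 < σ) (hη : 0 < η) (hψσ : BregmanStrongConvexOn X σ ψ)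
    (hx : x ∈ X) (hy : y ∈ X) :
    mirrorObjective g ψ x η x - mirrorObjective g ψ x η y ≤ η * ‖g‖ ^ 2 / (2 * σ) := by
  set r := ‖x - y‖
  have hsc : σ / 2 * r ^ 2 ≤ bregman ψ y x := by
    simpa only [r, norm_sub_rev] using hψσ y hy x hx
  have hg : g (x - y) ≤ ‖g‖ * r := (le_abs_self _).trans (g.le_opNorm _)
  have hamgm : ‖g‖ * r - σ / 2 * r ^ 2 / η ≤ η * ‖g‖ ^ 2 / (2 * σ) := by
    have hsq : η * ‖g‖ ^ 2 / (2 * σ) - (‖g‖ * r - σ / 2 * r ^ 2 / η)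
        = (η * ‖g‖ - σ * r) ^ 2 / (2 * η * σ) := by
      field_simp
      ring
    have : 0 ≤ (η * ‖g‖ - σ * r) ^ 2 / (2 * η * σ) := by positivity
    linarith
  have hdiv : σ / 2 * r ^ 2 / η ≤ bregman ψ y x / η := div_le_div_of_nonneg_right hsc hη.le
  simp only [mirrorObjective, bregman_self, zero_div, add_zero]
  linarith [map_sub g x y]

lemma norm_sub_le_of_isMinOn (hσ : 0 < σ) (hη : 0 < η) (hψσ : BregmanStrongConvexOn X σ ψ)
    (hψ : DifferentiableAt ℝ ψ y) (hX : Convex ℝ X) (hx : x ∈ X)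
    (hy : y ∈ X) (hmin : IsMinOn (mirrorObjective g ψ x η) X y) :
    ‖x - y‖ ≤ η * ‖g‖ / σ := by
  set r := ‖x - y‖
  have hopt := bregman_div_le_mirrorObjective_sub hψ hX hy hx hmin
  have hsc : σ * r ^ 2 ≤ bregman ψ x y + bregman ψ y x := by
    linarith [hψσ x hx y hy, norm_sub_rev y x ▸ hψσ y hy x hx]
  have hg : g (x - y) ≤ ‖g‖ * r := (le_abs_self _).trans (g.le_opNorm _)
  simp only [mirrorObjective, bregman_self, zero_div, add_zero] at hopt
  have hsum : bregman ψ x y + bregman ψ y x ≤ η * (‖g‖ * r) := by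
    rw [← div_le_iff₀' hη, add_div]
    linarith [map_sub g x y]
  rw [le_div_iff₀ hσ]
  rcases (show 0 ≤ r from norm_nonneg _).eq_or_lt with hr | hr
  · rw [← hr, zero_mul]; positivity
  · nlinarith

lemma sq_norm_sub_le_of_isMinOn (hσ : 0 < σ) (hη : 0 < η) (hψσ : BregmanStrongConvexOn X σ ψ)
    (hψ : DifferentiableAt ℝ ψ y) (hX : Convex ℝ X) (hy : y ∈ X)
    {x' : E} (hx' : x' ∈ X) (hmin : IsMinOn (mirrorObjective g ψ x η) X y) {ρ : ℝ}
    (happrox : mirrorObjective g ψ x η x' ≤ mirrorObjective g ψ x η y + ρ) :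
    ‖x' - y‖ ^ 2 ≤ 2 * η * ρ / σ := by
  have hopt := bregman_div_le_mirrorObjective_sub hψ hX hy hx' hmin
  have hsc := div_le_div_of_nonneg_right (hψσ x' hx' y hy) hη.le
  rw [le_div_iff₀ hσ]
  have : σ / 2 * ‖x' - y‖ ^ 2 / η ≤ ρ := by linarith
  rw [div_le_iff₀ hη] at this
  linarith

lemma apply_sub_le_of_isMinOn (hσ : 0 < σ) (hη : 0 < η) (hψσ : BregmanStrongConvexOn X σ ψ)
    (hψ : DifferentiableAt ℝ ψ y) (hX : Convex ℝ X) (hx : x ∈ X)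
    (hy : y ∈ X) (hz : z ∈ X) (hmin : IsMinOn (mirrorObjective g ψ x η) X y) :
    g (x - z) ≤ η * ‖g‖ ^ 2 / (2 * σ) + (bregman ψ z x - bregman ψ z y) / η := by
  have hopt := bregman_div_le_mirrorObjective_sub hψ hX hy hz hmin
  have hcenter := mirrorObjective_sub_le hσ hη hψσ (g := g) hx hy
  simp only [mirrorObjective, bregman_self, zero_div, add_zero] at hopt hcenter
  rw [sub_div]
  linarith [map_sub g x z]

lemma norm_sub_le_of_approx_isMinOn (hσ : 0 < σ) (hη : 0 < η)
    (hψσ : BregmanStrongConvexOn X σ ψ) (hψ : DifferentiableAt ℝ ψ y) (hX : Convex ℝ X)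
    (hy : y ∈ X) {x' : E} (hx' : x' ∈ X) (hmin : IsMinOn (mirrorObjective g ψ x η) X y)
    (happrox : mirrorObjective g ψ x η x' ≤ mirrorObjective g ψ x η y + η ^ 3 / (2 * σ)) :
    ‖x' - y‖ ≤ η ^ 2 / σ := by
  have hsq := sq_norm_sub_le_of_isMinOn hσ hη hψσ hψ hX hy hx' hmin happrox
  have hρ : 2 * η * (η ^ 3 / (2 * σ)) / σ = (η ^ 2 / σ) ^ 2 := by
    field_simp
  rw [hρ] at hsq
  exact (pow_le_pow_iff_left₀ (norm_nonneg _) (by positivity) two_ne_zero).1 hsq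

/-- A round without feedback, `x_{t+1} = x_t`, is the degenerate step with `g = 0`. -/
lemma isInexactMirrorStep_zero_self (hσ : 0 ≤ σ) (hη : 0 ≤ η) {ρ : ℝ} (hρ : 0 ≤ ρ)
    (hψσ : BregmanStrongConvexOn X σ ψ) (hx : x ∈ X) :
    IsInexactMirrorStep X ψ ρ 0 η x x := by
  refine ⟨hx, x, hx, fun w hw => ?_, ?_⟩
  · simpa [mirrorObjective] using div_nonneg (hψσ.nonneg hσ hw hx) hη
  · simpa using hρ

lemma norm_sub_le_of_isInexactMirrorStep (hσ : 0 < σ) (hη : 0 < η)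
    (hψσ : BregmanStrongConvexOn X σ ψ) (hψ : Differentiable ℝ ψ) (hX : Convex ℝ X) (hx : x ∈ X)
    {x' : E} (h : IsInexactMirrorStep X ψ (η ^ 3 / (2 * σ)) g η x x') :
    ‖x' - x‖ ≤ (η * ‖g‖ + η ^ 2) / σ := by
  obtain ⟨hx', y, hy, hmin, happrox⟩ := h
  calc ‖x' - x‖
    _ ≤ ‖x' - y‖ + ‖x - y‖ := by simpa only [dist_eq_norm] using dist_triangle_right x' x y
    _ ≤ η ^ 2 / σ + η * ‖g‖ / σ :=
      add_le_add (norm_sub_le_of_approx_isMinOn hσ hη hψσ (hψ y) hX hy hx' hmin happrox)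
        (norm_sub_le_of_isMinOn hσ hη hψσ (hψ y) hX hx hy hmin)
    _ = (η * ‖g‖ + η ^ 2) / σ := by ring

lemma apply_sub_le_of_isInexactMirrorStep (hσ : 0 < σ) (hη : 0 < η)
    (hψσ : BregmanStrongConvexOn X σ ψ) (hψ : Differentiable ℝ ψ) (hX : Convex ℝ X) (hx : x ∈ X)
    (hz : z ∈ X) {x' : E} (h : IsInexactMirrorStep X ψ (η ^ 3 / (2 * σ)) g η x x') {L D : ℝ}
    (hL : 0 ≤ L) (hlip : ∀ a ∈ X, ∀ b ∈ X, ‖fderiv ℝ ψ a - fderiv ℝ ψ b‖ ≤ L * ‖a - b‖)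
    (hD : ‖z - x'‖ ≤ D) :
    g (x - z) ≤ η * ‖g‖ ^ 2 / (2 * σ) + (bregman ψ z x - bregman ψ z x') / η + L * D * η / σ := by
  obtain ⟨hx', y, hy, hmin, happrox⟩ := h
  have hclose := norm_sub_le_of_approx_isMinOn hσ hη hψσ (hψ y) hX hy hx' hmin happrox
  have hdrift : (bregman ψ z x' - bregman ψ z y) / η ≤ L * D * η / σ := by
    rw [div_le_iff₀ hη]
    calc bregman ψ z x' - bregman ψ z y
      _ ≤ ‖fderiv ℝ ψ x' - fderiv ℝ ψ y‖ * ‖z - x'‖ :=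
          bregman_sub_bregman_le (hψσ.nonneg hσ.le hx' hy)
      _ ≤ L * (η ^ 2 / σ) * D :=
          mul_le_mul ((hlip x' hx' y hy).trans (mul_le_mul_of_nonneg_left hclose hL)) hD
            (norm_nonneg _) (by positivity)
      _ = L * D * η / σ * η := by ring
  have hstep := apply_sub_le_of_isMinOn hσ hη hψσ (hψ y) hX hx hy hz hmin
  rw [sub_div] at hstep hdrift ⊢
  linarith

end MirrorStep

lemma sum_Icc_inv_le_one_add_log (T : ℕ) : ∑ t ∈ Icc 1 T, (t : ℝ)⁻¹ ≤ 1 + Real.log T := by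
  simpa [harmonic_eq_sum_Icc] using harmonic_le_one_add_log T

lemma sum_Icc_inv_sq_le_two (T : ℕ) : ∑ t ∈ Icc 1 T, ((t : ℝ) ^ 2)⁻¹ ≤ 2 := by
  have h := sum_Ioo_inv_sq_le (α := ℝ) 0 (T + 1)
  rw [show Ioo 0 (T + 1) = Icc 1 T from val_inj.mp rfl] at h
  norm_num at h
  exact h

lemma sum_Icc_one_div_mul_le {γ : ℝ} (hγ : 0 < γ) (T : ℕ) :
    ∑ t ∈ Icc 1 T, 1 / (γ * t) ≤ (1 + Real.log T) / γ := by
  calc ∑ t ∈ Icc 1 T, 1 / (γ * t)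
    _ = (∑ t ∈ Icc 1 T, (t : ℝ)⁻¹) / γ := by
        rw [sum_div]
        exact sum_congr rfl fun t _ => by field_simp
    _ ≤ (1 + Real.log T) / γ := by gcongr; exact sum_Icc_inv_le_one_add_log T

lemma sum_Icc_one_div_mul_sq_le {γ : ℝ} (hγ : 0 < γ) (T : ℕ) :
    ∑ t ∈ Icc 1 T, (1 / (γ * t)) ^ 2 ≤ 2 / γ ^ 2 := by
  calc ∑ t ∈ Icc 1 T, (1 / (γ * t)) ^ 2
    _ = (∑ t ∈ Icc 1 T, ((t : ℝ) ^ 2)⁻¹) / γ ^ 2 := by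
        rw [sum_div]
        exact sum_congr rfl fun t _ => by field_simp
    _ ≤ 2 / γ ^ 2 := by gcongr; exact sum_Icc_inv_sq_le_two T

def feedbackSet (T : ℕ) (d : ℕ → ℕ) (t : ℕ) : Finset ℕ :=
  (Icc 1 T).filter (fun k => k + d k - 1 = t)

section DelayedFeedback

variable {T : ℕ} {d : ℕ → ℕ}

lemma card_feedbackSet_le (hd : ∀ t ∈ Icc 1 T, 1 ≤ d t) (t : ℕ) :
    #(feedbackSet T d t) ≤ (Icc 1 T).sup d := by
  calc #(feedbackSet T d t)
    _ ≤ #(Icc (t + 1 - (Icc 1 T).sup d) t) := card_le_card fun k hk => by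
        obtain ⟨hkT, hkt⟩ := mem_filter.1 hk
        have := hd k hkT
        have := le_sup (f := d) hkT
        simp only [mem_Icc]
        omega
    _ ≤ (Icc 1 T).sup d := by
        rw [Nat.card_Icc]
        omega

lemma add_sub_one_mem_Icc (hd : ∀ t ∈ Icc 1 T, 1 ≤ d t ∧ t + d t - 1 ≤ T) {k : ℕ}
    (hk : k ∈ Icc 1 T) : k + d k - 1 ∈ Icc 1 T := by
  have := hd k hk
  simp only [mem_Icc] at hk ⊢
  omega

lemma sum_sum_feedbackSet {M : Type*} [AddCommMonoid M]
    (hd : ∀ t ∈ Icc 1 T, 1 ≤ d t ∧ t + d t - 1 ≤ T) (h : ℕ → ℕ → M) :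
    ∑ t ∈ Icc 1 T, ∑ k ∈ feedbackSet T d t, h k t = ∑ k ∈ Icc 1 T, h k (k + d k - 1) := by
  rw [← sum_fiberwise_of_maps_to (fun k hk => add_sub_one_mem_Icc hd hk)
    fun k => h k (k + d k - 1)]
  refine sum_congr rfl fun t _ => sum_congr rfl fun k hk => ?_
  rw [(mem_filter.1 hk).2]

lemma sum_card_feedbackSet_mul_le (hd : ∀ t ∈ Icc 1 T, 1 ≤ d t ∧ t + d t - 1 ≤ T)
    {η : ℕ → ℝ} (hη : AntitoneOn η (Icc 1 T)) :
    ∑ t ∈ Icc 1 T, #(feedbackSet T d t) * η t ≤ ∑ t ∈ Icc 1 T, η t := by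
  calc ∑ t ∈ Icc 1 T, #(feedbackSet T d t) * η t
    _ = ∑ k ∈ Icc 1 T, η (k + d k - 1) := by
        rw [← sum_sum_feedbackSet hd fun _ t => η t]
        simp only [sum_const, nsmul_eq_mul]
    _ ≤ ∑ t ∈ Icc 1 T, η t :=
        sum_le_sum fun k hk => hη hk (add_sub_one_mem_Icc hd hk) (by have := hd k hk; omega)

lemma sum_sum_Ico_le (hd : ∀ t ∈ Icc 1 T, t + d t - 1 ≤ T) {a : ℕ → ℝ}
    (ha : ∀ j, 0 ≤ a j) :
    ∑ t ∈ Icc 1 T, ∑ j ∈ Ico t (t + d t - 1), a j ≤ (Icc 1 T).sup d * ∑ j ∈ Icc 1 T, a j := by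
  set D := (Icc 1 T).sup d
  have hswap : ∀ t j, t ∈ Icc 1 T ∧ j ∈ Ico t (t + d t - 1) ↔
      t ∈ (Icc 1 T).filter (fun t => j ∈ Ico t (t + d t - 1)) ∧ j ∈ Icc 1 T := fun t j => by
    simp only [mem_filter, mem_Icc, mem_Ico]
    constructor
    · rintro ⟨ht, hj⟩
      have := hd t (mem_Icc.2 ht)
      exact ⟨⟨ht, hj⟩, by omega, by omega⟩
    · exact fun h => h.1
  rw [sum_comm' hswap, mul_sum]
  refine sum_le_sum fun j _ => ?_
  rw [sum_const, nsmul_eq_mul]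
  refine mul_le_mul_of_nonneg_right ?_ (ha j)
  have hsub : (Icc 1 T).filter (fun t => j ∈ Ico t (t + d t - 1)) ⊆ Icc (j + 2 - D) j :=
    fun t ht => by
      obtain ⟨htT, htj⟩ := mem_filter.1 ht
      have := le_sup (f := d) htT
      simp only [mem_Icc, mem_Ico] at htj ⊢
      omega
  exact_mod_cast (card_le_card hsub).trans (by rw [Nat.card_Icc]; omega)

lemma sum_Icc_mul_sub_succ (b : ℕ → ℝ) (n : ℕ) :
    ∑ t ∈ Icc 1 n, (t : ℝ) * (b t - b (t + 1)) = ∑ t ∈ Icc 1 n, b t - n * b (n + 1) := by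
  induction n with
  | zero => simp
  | succ n ih =>
    rw [sum_Icc_succ_top (by omega), sum_Icc_succ_top (by omega), ih]
    push_cast
    ring

lemma sum_apply_sub_delay_le (hd : ∀ t ∈ Icc 1 T, 1 ≤ d t ∧ t + d t - 1 ≤ T)
    {u : ℕ → E →L[ℝ] ℝ} {x : ℕ → E} {G : ℝ} (hG : 0 ≤ G) (hu : ∀ t ∈ Icc 1 T, ‖u t‖ ≤ G) :
    ∑ t ∈ Icc 1 T, u t (x t - x (t + d t - 1)) ≤
      G * (Icc 1 T).sup d * ∑ t ∈ Icc 1 T, ‖x (t + 1) - x t‖ := by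
  calc ∑ t ∈ Icc 1 T, u t (x t - x (t + d t - 1))
    _ ≤ ∑ t ∈ Icc 1 T, G * ∑ j ∈ Ico t (t + d t - 1), ‖x (j + 1) - x j‖ := by
        refine sum_le_sum fun t ht => ?_
        have hchain : ‖x t - x (t + d t - 1)‖ ≤ ∑ j ∈ Ico t (t + d t - 1), ‖x (j + 1) - x j‖ := by
          rw [← dist_eq_norm]
          simpa only [dist_eq_norm'] using
            dist_le_Ico_sum_dist x (by have := hd t ht; omega : t ≤ t + d t - 1)
        calc u t (x t - x (t + d t - 1))
          _ ≤ ‖u t‖ * ‖x t - x (t + d t - 1)‖ := (le_abs_self _).trans ((u t).le_opNorm _)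
          _ ≤ G * ∑ j ∈ Ico t (t + d t - 1), ‖x (j + 1) - x j‖ :=
              mul_le_mul (hu t ht) hchain (norm_nonneg _) hG
    _ ≤ G * ((Icc 1 T).sup d * ∑ t ∈ Icc 1 T, ‖x (t + 1) - x t‖) := by
        rw [← mul_sum]
        exact mul_le_mul_of_nonneg_left (sum_sum_Ico_le (fun t ht => (hd t ht).2) fun _ => norm_nonneg _) hG
    _ = _ := by ring

lemma norm_sum_feedbackSet_le {u : ℕ → E →L[ℝ] ℝ} {G : ℝ} (hu : ∀ t ∈ Icc 1 T, ‖u t‖ ≤ G)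
    (t : ℕ) : ‖∑ k ∈ feedbackSet T d t, u k‖ ≤ #(feedbackSet T d t) * G := by
  rw [← nsmul_eq_mul, ← sum_const]
  exact norm_sum_le_of_le _ fun k hk => hu k (mem_filter.1 hk).1

lemma sum_norm_sub_succ_le (hd : ∀ t ∈ Icc 1 T, 1 ≤ d t ∧ t + d t - 1 ≤ T)
    {u : ℕ → E →L[ℝ] ℝ} {x : ℕ → E} {η : ℕ → ℝ} {G σ : ℝ} (hσ : 0 < σ) (hG : 0 ≤ G)
    (hu : ∀ t ∈ Icc 1 T, ‖u t‖ ≤ G) (hη0 : ∀ t ∈ Icc 1 T, 0 ≤ η t)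
    (hη : AntitoneOn η (Icc 1 T))
    (hmove : ∀ t ∈ Icc 1 T,
      ‖x (t + 1) - x t‖ ≤ (η t * ‖∑ k ∈ feedbackSet T d t, u k‖ + η t ^ 2) / σ) :
    ∑ t ∈ Icc 1 T, ‖x (t + 1) - x t‖ ≤
      (G * ∑ t ∈ Icc 1 T, η t + ∑ t ∈ Icc 1 T, η t ^ 2) / σ := by
  calc ∑ t ∈ Icc 1 T, ‖x (t + 1) - x t‖
    _ ≤ ∑ t ∈ Icc 1 T, (G * (#(feedbackSet T d t) * η t) + η t ^ 2) / σ := by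
        refine sum_le_sum fun t ht => (hmove t ht).trans ?_
        rw [show G * (#(feedbackSet T d t) * η t) = η t * (#(feedbackSet T d t) * G) by ring]
        gcongr
        · exact hη0 t ht
        · exact norm_sum_feedbackSet_le hu t
    _ = (G * ∑ t ∈ Icc 1 T, #(feedbackSet T d t) * η t + ∑ t ∈ Icc 1 T, η t ^ 2) / σ := by
        rw [← sum_div, sum_add_distrib, mul_sum]
    _ ≤ (G * ∑ t ∈ Icc 1 T, η t + ∑ t ∈ Icc 1 T, η t ^ 2) / σ := by
        gcongr (G * ?_ + _) / σ
        exact sum_card_feedbackSet_mul_le hd hη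

lemma antitoneOn_of_eq_one_div_mul {η : ℕ → ℝ} {γ : ℝ} (hγ : 0 < γ)
    (hη : ∀ t ∈ Icc 1 T, η t = 1 / (γ * t)) : AntitoneOn η (Icc 1 T) := fun s hs t ht hst => by
  rw [hη s hs, hη t ht]
  have : (1 : ℝ) ≤ s := by exact_mod_cast (mem_Icc.1 hs).1
  gcongr

lemma sum_feedback_apply_sub_le (hd : ∀ t ∈ Icc 1 T, 1 ≤ d t ∧ t + d t - 1 ≤ T)
    {u : ℕ → E →L[ℝ] ℝ} {x : ℕ → E} {z : E} {b η : ℕ → ℝ} {G σ γ K : ℝ} (hσ : 0 < σ)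
    (hγ : 0 < γ) (hu : ∀ t ∈ Icc 1 T, ‖u t‖ ≤ G) (hη : ∀ t ∈ Icc 1 T, η t = 1 / (γ * t))
    (hb : 0 ≤ b (T + 1))
    (hstep : ∀ t ∈ Icc 1 T, (∑ k ∈ feedbackSet T d t, u k) (x t - z) ≤
      η t * ‖∑ k ∈ feedbackSet T d t, u k‖ ^ 2 / (2 * σ) + (b t - b (t + 1)) / η t + K * η t) :
    ∑ t ∈ Icc 1 T, (∑ k ∈ feedbackSet T d t, u k) (x t - z) ≤
      (Icc 1 T).sup d * G ^ 2 * (∑ t ∈ Icc 1 T, η t) / (2 * σ) + γ * ∑ t ∈ Icc 1 T, b t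
        + K * ∑ t ∈ Icc 1 T, η t := by
  have hη0 : ∀ t ∈ Icc 1 T, 0 ≤ η t := fun t ht => by rw [hη t ht]; positivity
  have hquad : ∀ t ∈ Icc 1 T, η t * ‖∑ k ∈ feedbackSet T d t, u k‖ ^ 2 ≤
      (Icc 1 T).sup d * G ^ 2 * (#(feedbackSet T d t) * η t) := fun t ht => by
    have hcard : (#(feedbackSet T d t) : ℝ) ≤ (Icc 1 T).sup d := by
      exact_mod_cast card_feedbackSet_le (fun t ht => (hd t ht).1) t
    have hnorm := norm_sum_feedbackSet_le (d := d) hu t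
    have : ‖∑ k ∈ feedbackSet T d t, u k‖ ^ 2 ≤ (Icc 1 T).sup d * G ^ 2 * #(feedbackSet T d t) :=
      calc ‖∑ k ∈ feedbackSet T d t, u k‖ ^ 2
        _ ≤ (#(feedbackSet T d t) * G) ^ 2 := by gcongr
        _ = #(feedbackSet T d t) * G ^ 2 * #(feedbackSet T d t) := by ring
        _ ≤ (Icc 1 T).sup d * G ^ 2 * #(feedbackSet T d t) := by gcongr
    nlinarith [hη0 t ht]
  have htelescope : ∀ t ∈ Icc 1 T, (b t - b (t + 1)) / η t = γ * (t * (b t - b (t + 1))) :=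
    fun t ht => by rw [hη t ht]; field_simp
  calc ∑ t ∈ Icc 1 T, (∑ k ∈ feedbackSet T d t, u k) (x t - z)
    _ ≤ ∑ t ∈ Icc 1 T, (η t * ‖∑ k ∈ feedbackSet T d t, u k‖ ^ 2 / (2 * σ)
          + γ * (t * (b t - b (t + 1))) + K * η t) :=
        sum_le_sum fun t ht => htelescope t ht ▸ hstep t ht
    _ = (∑ t ∈ Icc 1 T, η t * ‖∑ k ∈ feedbackSet T d t, u k‖ ^ 2) / (2 * σ)
          + γ * ∑ t ∈ Icc 1 T, (t : ℝ) * (b t - b (t + 1)) + K * ∑ t ∈ Icc 1 T, η t := by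
        rw [sum_add_distrib, sum_add_distrib, sum_div, mul_sum, mul_sum]
    _ ≤ (Icc 1 T).sup d * G ^ 2 * (∑ t ∈ Icc 1 T, η t) / (2 * σ) + γ * ∑ t ∈ Icc 1 T, b t
          + K * ∑ t ∈ Icc 1 T, η t := by
        rw [sum_Icc_mul_sub_succ]
        gcongr
        · calc ∑ t ∈ Icc 1 T, η t * ‖∑ k ∈ feedbackSet T d t, u k‖ ^ 2
            _ ≤ ∑ t ∈ Icc 1 T, (Icc 1 T).sup d * G ^ 2 * (#(feedbackSet T d t) * η t) :=
                sum_le_sum hquad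
            _ ≤ (Icc 1 T).sup d * G ^ 2 * ∑ t ∈ Icc 1 T, η t := by
                rw [← mul_sum]
                gcongr _ * ?_
                exact sum_card_feedbackSet_mul_le hd (antitoneOn_of_eq_one_div_mul hγ hη)
        · nlinarith [mul_nonneg (Nat.cast_nonneg (α := ℝ) T) hb]

theorem delayed_linearized_regret_le (hd : ∀ t ∈ Icc 1 T, 1 ≤ d t ∧ t + d t - 1 ≤ T)
    {u : ℕ → E →L[ℝ] ℝ} {x : ℕ → E} {z : E} {b η : ℕ → ℝ} {G σ γ K : ℝ} (hσ : 0 < σ)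
    (hγ : 0 < γ) (hG : 0 ≤ G) (hK : 0 ≤ K) (hu : ∀ t ∈ Icc 1 T, ‖u t‖ ≤ G)
    (hη : ∀ t ∈ Icc 1 T, η t = 1 / (γ * t)) (hb : 0 ≤ b (T + 1))
    (hstep : ∀ t ∈ Icc 1 T, (∑ k ∈ feedbackSet T d t, u k) (x t - z) ≤
      η t * ‖∑ k ∈ feedbackSet T d t, u k‖ ^ 2 / (2 * σ) + (b t - b (t + 1)) / η t + K * η t)
    (hmove : ∀ t ∈ Icc 1 T,
      ‖x (t + 1) - x t‖ ≤ (η t * ‖∑ k ∈ feedbackSet T d t, u k‖ + η t ^ 2) / σ) :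
    ∑ t ∈ Icc 1 T, u t (x t - z) - γ * ∑ t ∈ Icc 1 T, b t ≤
      (3 / 2 * (Icc 1 T).sup d * G ^ 2 * ((1 + Real.log T) / γ)
        + (Icc 1 T).sup d * G * (2 / γ ^ 2)) / σ + K * ((1 + Real.log T) / γ) := by
  have hsplit : ∑ t ∈ Icc 1 T, u t (x t - z) = ∑ t ∈ Icc 1 T, u t (x t - x (t + d t - 1))
      + ∑ t ∈ Icc 1 T, (∑ k ∈ feedbackSet T d t, u k) (x t - z) := by
    simp only [_root_.sum_apply]
    rw [sum_sum_feedbackSet hd fun k t => u k (x t - z), ← sum_add_distrib]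
    exact sum_congr rfl fun t _ => by rw [← map_add, sub_add_sub_cancel]
  have hdelay := sum_apply_sub_delay_le hd hG hu (x := x)
  have hmoves := sum_norm_sub_succ_le hd hσ hG hu (fun t ht => by rw [hη t ht]; positivity)
    (antitoneOn_of_eq_one_div_mul hγ hη) hmove
  have hfeed := sum_feedback_apply_sub_le hd hσ hγ hu hη hb hstep
  have hmoves' := mul_le_mul_of_nonneg_left hmoves (by positivity : 0 ≤ G * (Icc 1 T).sup d)
  have hcollect : G * (Icc 1 T).sup d * ((G * ∑ t ∈ Icc 1 T, η t + ∑ t ∈ Icc 1 T, η t ^ 2) / σ)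
      + (Icc 1 T).sup d * G ^ 2 * (∑ t ∈ Icc 1 T, η t) / (2 * σ)
      = (3 / 2 * (Icc 1 T).sup d * G ^ 2 * ∑ t ∈ Icc 1 T, η t
        + (Icc 1 T).sup d * G * ∑ t ∈ Icc 1 T, η t ^ 2) / σ := by
    field_simp
    ring
  have hS1 : ∑ t ∈ Icc 1 T, η t ≤ (1 + Real.log T) / γ :=
    (sum_congr rfl hη).trans_le (sum_Icc_one_div_mul_le hγ T)
  have hS2 : ∑ t ∈ Icc 1 T, η t ^ 2 ≤ 2 / γ ^ 2 :=
    (sum_congr rfl fun t ht => by rw [hη t ht]).trans_le (sum_Icc_one_div_mul_sq_le hγ T)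
  calc ∑ t ∈ Icc 1 T, u t (x t - z) - γ * ∑ t ∈ Icc 1 T, b t
    _ ≤ (3 / 2 * (Icc 1 T).sup d * G ^ 2 * ∑ t ∈ Icc 1 T, η t
          + (Icc 1 T).sup d * G * ∑ t ∈ Icc 1 T, η t ^ 2) / σ + K * ∑ t ∈ Icc 1 T, η t := by
        linarith
    _ ≤ _ := by gcongr

end DelayedFeedback

lemma forall_mem_Icc_of_succ {P : ℕ → Prop} {T : ℕ} (h1 : P 1)
    (hsucc : ∀ t ∈ Icc 1 T, P t → P (t + 1)) : ∀ t ∈ Icc 1 (T + 1), P t := by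
  intro t ht
  obtain ⟨ht1, htT⟩ := mem_Icc.1 ht
  induction t, ht1 using Nat.le_induction with
  | base => exact h1
  | succ t ht1 ih => exact hsucc t (mem_Icc.2 ⟨ht1, by omega⟩) (ih (by simp; omega) (by omega))

lemma sum_sub_sum_le_of_bregman_le {s : Finset ℕ} {f : ℕ → E → ℝ} {x : ℕ → E} {z : E}
    {γ : ℝ} {B : E → E → ℝ}
    (hrel : ∀ t ∈ s, f t z - f t (x t) - fderiv ℝ (f t) (x t) (z - x t) ≥ γ * B z (x t)) :
    ∑ t ∈ s, f t (x t) - ∑ t ∈ s, f t z ≤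
      ∑ t ∈ s, fderiv ℝ (f t) (x t) (x t - z) - γ * ∑ t ∈ s, B z (x t) := by
  rw [← sum_sub_distrib, mul_sum, ← sum_sub_distrib]
  refine sum_le_sum fun t ht => ?_
  have := hrel t ht
  rw [← neg_sub (x t) z, map_neg] at this
  linarith

end

theorem sdmd_rsc_regret_general
    {E : Type*} [NormedAddCommGroup E] [NormedSpace ℝ E]
    (X : Set E) (hX : Convex ℝ X)
    (R : ℝ) (hR : ∀ z ∈ X, ‖z‖ ≤ R)
    (T : ℕ) (hT : 1 ≤ T) (d : ℕ → ℕ)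
    (hd : ∀ t ∈ Finset.Icc 1 T, 1 ≤ d t ∧ t + d t - 1 ≤ T)
    (F : ℕ → Finset ℕ)
    (hF : ∀ t, F t = (Finset.Icc 1 T).filter (fun k => k + d k - 1 = t))
    (f : ℕ → E → ℝ) (Gstar : ℝ)
    (hG : ∀ t ∈ Finset.Icc 1 T, ∀ z ∈ X, ‖fderiv ℝ (f t) z‖ ≤ Gstar)
    (ψ : E → ℝ) (σ γ ξ : ℝ) (hσ : 0 < σ) (hγ : 0 < γ) (hξ : 0 < ξ)
    (hψdiff : Differentiable ℝ ψ)
    (B : E → E → ℝ)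
    (hB : ∀ a b, B a b = ψ a - ψ b - fderiv ℝ ψ b (a - b))
    (hψsc : ∀ a ∈ X, ∀ b ∈ X, B a b ≥ σ / 2 * ‖a - b‖ ^ 2)
    (hψlip : ∀ a ∈ X, ∀ b ∈ X,
      ‖fderiv ℝ ψ a - fderiv ℝ ψ b‖ ≤ ξ * Gstar * ‖a - b‖)
    (hrel : ∀ t ∈ Finset.Icc 1 T, ∀ a ∈ X, ∀ b ∈ X,
      f t a - f t b - fderiv ℝ (f t) b (a - b) ≥ γ * B a b)
    (x : ℕ → E) (hx1 : x 1 ∈ X)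
    (ην : ℕ → ℝ)
    (hην : ∀ t ∈ Finset.Icc 1 T, ην t = 1 / (γ * (t : ℝ)))
    (Bt : ℕ → E → ℝ)
    (hBt : ∀ t z, Bt t z =
      (∑ k ∈ F t, fderiv ℝ (f k) (x k) z) + B z (x t) / ην t)
    (hupd : ∀ t ∈ Finset.Icc 1 T, (F t).Nonempty →
      x (t + 1) ∈ X ∧ ∃ ystar ∈ X, IsMinOn (Bt t) X ystar ∧
        Bt t (x (t + 1)) ≤ Bt t ystar + (ην t) ^ 3 / (2 * σ))
    (hupd0 : ∀ t ∈ Finset.Icc 1 T, F t = ∅ → x (t + 1) = x t)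
    :
    ∀ xstar ∈ X,
      ∑ t ∈ Finset.Icc 1 T, f t (x t) - ∑ t ∈ Finset.Icc 1 T, f t xstar
        ≤ (3 * (((Finset.Icc 1 T).sup d : ℕ) : ℝ) * Gstar ^ 2 + 8 * ξ * R * Gstar)
              * (1 + Real.log T) / (2 * σ * γ)
          + 6 * (((Finset.Icc 1 T).sup d : ℕ) : ℝ) * Gstar / (σ * γ ^ 2)
          + 2 * (((Finset.Icc 1 T).sup d : ℕ) : ℝ) * ξ * Gstar / (σ ^ 2 * γ ^ 2) := by
  intro z hz
  obtain rfl : B = bregman ψ := funext₂ hB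
  obtain rfl : F = feedbackSet T d := funext hF
  have hψσ : BregmanStrongConvexOn X σ ψ := hψsc
  set g := fun t => ∑ k ∈ feedbackSet T d t, fderiv ℝ (f k) (x k)
  have hG0 : 0 ≤ Gstar := (norm_nonneg _).trans (hG 1 (mem_Icc.2 ⟨le_rfl, hT⟩) _ hx1)
  have hR0 : 0 ≤ R := (norm_nonneg _).trans (hR _ hx1)
  have hη : ∀ t ∈ Icc 1 T, 0 < ην t := fun t ht => by
    rw [hην t ht]; have := (mem_Icc.1 ht).1; positivity
  have hstep : ∀ t ∈ Icc 1 T, x t ∈ X →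
      IsInexactMirrorStep X ψ (ην t ^ 3 / (2 * σ)) (g t) (ην t) (x t) (x (t + 1)) := by
    intro t ht hxt
    rcases (feedbackSet T d t).eq_empty_or_nonempty with hFt | hFt
    · rw [hupd0 t ht hFt]
      simpa [g, hFt] using isInexactMirrorStep_zero_self hσ.le (hη t ht).le
        (by have := hη t ht; positivity) hψσ hxt
    · have hBt' : Bt t = mirrorObjective (g t) ψ (x t) (ην t) :=
        funext fun w => by rw [hBt, mirrorObjective, _root_.sum_apply]
      simpa only [IsInexactMirrorStep, ← hBt'] using hupd t ht hFt
  have hxX : ∀ t ∈ Icc 1 (T + 1), x t ∈ X :=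
    forall_mem_Icc_of_succ hx1 fun t ht hxt => (hstep t ht hxt).1
  have hxt : ∀ t ∈ Icc 1 T, x t ∈ X := fun t ht => hxX t (Icc_subset_Icc_right T.le_succ ht)
  have hround := fun t ht => hstep t ht (hxt t ht)
  have hregret := delayed_linearized_regret_le (u := fun t => fderiv ℝ (f t) (x t))
    (b := fun t => bregman ψ z (x t)) (K := ξ * Gstar * (2 * R) / σ)
    hd hσ hγ hG0 (by positivity) (fun t ht => hG t ht _ (hxt t ht)) hην
    (hψσ.nonneg hσ.le hz (hxX (T + 1) (by simp)))
    (fun t ht => (apply_sub_le_of_isInexactMirrorStep hσ (hη t ht) hψσ hψdiff hX (hxt t ht) hz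
      (hround t ht) (by positivity) hψlip (D := 2 * R) ((norm_sub_le _ _).trans
        (by linarith [hR z hz, hR _ (hround t ht).1]))).trans_eq (by ring))
    (fun t ht => norm_sub_le_of_isInexactMirrorStep hσ (hη t ht) hψσ hψdiff hX (hxt t ht)
      (hround t ht))
  calc ∑ t ∈ Icc 1 T, f t (x t) - ∑ t ∈ Icc 1 T, f t z
    _ ≤ ∑ t ∈ Icc 1 T, fderiv ℝ (f t) (x t) (x t - z) - γ * ∑ t ∈ Icc 1 T, bregman ψ z (x t) :=
        sum_sub_sum_le_of_bregman_le fun t ht => hrel t ht z hz (x t) (hxt t ht)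
    _ ≤ _ := hregret
    _ ≤ _ := by
        have hslack : 0 ≤ 2 * ξ * R * Gstar * (1 + Real.log T) / (σ * γ)
            + 4 * (Icc 1 T).sup d * Gstar / (σ * γ ^ 2)
            + 2 * (Icc 1 T).sup d * ξ * Gstar / (σ ^ 2 * γ ^ 2) := by positivity
        rw [← sub_nonneg]
        convert hslack using 1
        field_simp
        ring

/-- Theorem 6: SDMD-RSC regret bound. -/
theorem sdmd_rsc_regret
    {E : Type*} [NormedAddCommGroup E] [NormedSpace ℝ E]
    (X : Set E) (hXne : X.Nonempty) (hX : Convex ℝ X)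
    (R : ℝ) (hR : ∀ z ∈ X, ‖z‖ ≤ R)
    (T : ℕ) (hT : 1 ≤ T) (d : ℕ → ℕ)
    (hd : ∀ t ∈ Finset.Icc 1 T, 1 ≤ d t ∧ t + d t - 1 ≤ T)
    (F : ℕ → Finset ℕ)
    (hF : ∀ t, F t = (Finset.Icc 1 T).filter (fun k => k + d k - 1 = t))
    (f : ℕ → E → ℝ) (Gstar : ℝ)
    (hfdiff : ∀ t ∈ Finset.Icc 1 T, Differentiable ℝ (f t))
    (hG : ∀ t ∈ Finset.Icc 1 T, ∀ z ∈ X, ‖fderiv ℝ (f t) z‖ ≤ Gstar)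
    (ψ : E → ℝ) (σ γ ξ : ℝ) (hσ : 0 < σ) (hγ : 0 < γ) (hξ : 0 < ξ)
    (hψdiff : Differentiable ℝ ψ)
    (B : E → E → ℝ)
    (hB : ∀ a b, B a b = ψ a - ψ b - fderiv ℝ ψ b (a - b))
    (hψsc : ∀ a ∈ X, ∀ b ∈ X, B a b ≥ σ / 2 * ‖a - b‖ ^ 2)
    (hψlip : ∀ a ∈ X, ∀ b ∈ X,
      ‖fderiv ℝ ψ a - fderiv ℝ ψ b‖ ≤ ξ * Gstar * ‖a - b‖)
    (hrel : ∀ t ∈ Finset.Icc 1 T, ∀ a ∈ X, ∀ b ∈ X,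
      f t a - f t b - fderiv ℝ (f t) b (a - b) ≥ γ * B a b)
    (x : ℕ → E) (hx1 : x 1 ∈ X)
    (ην : ℕ → ℝ)
    (hην : ∀ t ∈ Finset.Icc 1 T, ην t = 1 / (γ * (t : ℝ)))
    (Bt : ℕ → E → ℝ)
    (hBt : ∀ t z, Bt t z =
      (∑ k ∈ F t, fderiv ℝ (f k) (x k) z) + B z (x t) / ην t)
    (hupd : ∀ t ∈ Finset.Icc 1 T, (F t).Nonempty →
      x (t + 1) ∈ X ∧ ∃ ystar ∈ X, IsMinOn (Bt t) X ystar ∧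
        Bt t (x (t + 1)) ≤ Bt t ystar + (ην t) ^ 3 / (2 * σ))
    (hupd0 : ∀ t ∈ Finset.Icc 1 T, F t = ∅ → x (t + 1) = x t)
    :
    ∀ xstar ∈ X,
      ∑ t ∈ Finset.Icc 1 T, f t (x t) - ∑ t ∈ Finset.Icc 1 T, f t xstar
        ≤ (3 * (((Finset.Icc 1 T).sup d : ℕ) : ℝ) * Gstar ^ 2 + 8 * ξ * R * Gstar)
              * (1 + Real.log T) / (2 * σ * γ)
          + 6 * (((Finset.Icc 1 T).sup d : ℕ) : ℝ) * Gstar / (σ * γ ^ 2)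
          + 2 * (((Finset.Icc 1 T).sup d : ℕ) : ℝ) * ξ * Gstar / (σ ^ 2 * γ ^ 2) :=
  sdmd_rsc_regret_general X hX R hR T hT d hd F hF f Gstar hG ψ σ γ ξ hσ hγ hξ hψdiff B hB hψsc
    hψlip hrel x hx1 ην hην Bt hBt hupd hupd0
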